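/- Suppose a set S ∈ 𝕄 satisfies the δ-DMO guarantee ‖z_S‖₂ ≥ δ · max_{S' ∈ 𝕄} ‖z_{S'}‖₂ with δ ∈ (0,1], and let v = -C · z_S / ‖z_S‖₂ (assuming z_S ≠ 0). Then v satisfies the approximate IPO guarantee ⟨z, v⟩ ≤ δ · min_{s ∈ D} ⟨z, s⟩, where D = conv{x : ‖x‖₂ ≤ C, supp(x) ∈ 𝕄}. -/

import Mathlib

open scoped InnerProductSpace

noncomputable def restrict {d : ℕ} (z : EuclideanSpace ℝ (Fin d)) (S : Finset (Fin d)) :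
    EuclideanSpace ℝ (Fin d) :=
  WithLp.toLp 2 (fun i => if i ∈ S then z i else 0)

/-!
Each generator `x` of `D` is supported in some `S' ∈ 𝕄`, so by Cauchy–Schwarz
`⟪z, x⟫ = ⟪z_{S'}, x⟫ ≥ -‖z_{S'}‖ C ≥ -‖z_S‖ C / δ`, while `⟪z, v⟫ = -C ‖z_S‖`.
A lower bound on a linear functional passes from the generators to their convex hull.
-/

theorem le_inner_of_mem_convexHull {E : Type*} [NormedAddCommGroup E] [InnerProductSpace ℝ E]
    {A : Set E} {z : E} {c : ℝ} (hA : ∀ x ∈ A, c ≤ ⟪z, x⟫_ℝ) {s : E}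
    (hs : s ∈ convexHull ℝ A) : c ≤ ⟪z, s⟫_ℝ :=
  convexHull_min hA (convex_halfSpace_ge (innerₛₗ ℝ z).isLinear c) hs

section restrict

variable {d : ℕ} (z : EuclideanSpace ℝ (Fin d)) (S : Finset (Fin d))

theorem inner_restrict_self : ⟪z, restrict z S⟫_ℝ = ‖restrict z S‖ ^ 2 := by
  rw [← real_inner_self_eq_norm_sq]
  simp only [PiLp.inner_apply, RCLike.inner_apply, conj_trivial, restrict]
  refine Finset.sum_congr rfl fun i _ => ?_
  by_cases h : i ∈ S <;> simp [h]

theorem inner_eq_inner_restrict_of_support_subset {x : EuclideanSpace ℝ (Fin d)}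
    (hx : ∀ i, x i ≠ 0 → i ∈ S) : ⟪z, x⟫_ℝ = ⟪restrict z S, x⟫_ℝ := by
  simp only [PiLp.inner_apply, RCLike.inner_apply, conj_trivial, restrict]
  refine Finset.sum_congr rfl fun i _ => ?_
  by_cases h : i ∈ S
  · simp [h]
  · simp [h, not_imp_comm.mp (hx i) h]

theorem neg_norm_restrict_mul_norm_le_inner {x : EuclideanSpace ℝ (Fin d)}
    (hx : ∀ i, x i ≠ 0 → i ∈ S) : -(‖restrict z S‖ * ‖x‖) ≤ ⟪z, x⟫_ℝ := by
  rw [inner_eq_inner_restrict_of_support_subset z S hx]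
  exact neg_le_of_abs_le (abs_real_inner_le_norm _ _)

-- Also true for `restrict z S = 0`, both sides being `0` since `C / 0 = 0`.
theorem inner_neg_smul_restrict (C : ℝ) :
    ⟪z, (-(C / ‖restrict z S‖)) • restrict z S⟫_ℝ = -(C * ‖restrict z S‖) := by
  rw [real_inner_smul_right, inner_restrict_self, neg_mul, div_mul_eq_mul_div, mul_comm C,
    div_sq_cancel, mul_comm]

end restrict

theorem stmt2_general {d : ℕ} (𝕄 : Finset (Finset (Fin d)))
    (C : ℝ) (z : EuclideanSpace ℝ (Fin d))
    (δ : ℝ) (hδ0 : 0 < δ)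
    (S : Finset (Fin d))
    (hdmo : ∀ S' ∈ 𝕄, δ * ‖restrict z S'‖ ≤ ‖restrict z S‖) :
    ∀ s ∈ convexHull ℝ {x : EuclideanSpace ℝ (Fin d) |
        ‖x‖ ≤ C ∧ ∃ S' ∈ 𝕄, ∀ i, x i ≠ 0 → i ∈ S'},
      ⟪z, ((-(C / ‖restrict z S‖)) • restrict z S : EuclideanSpace ℝ (Fin d))⟫_ℝ
        ≤ δ * ⟪z, s⟫_ℝ := by
  intro s hs
  rw [inner_neg_smul_restrict, ← real_inner_smul_left]
  refine le_inner_of_mem_convexHull ?_ hs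
  rintro x ⟨hxC, S', hS', hsupp⟩
  have hCS := neg_norm_restrict_mul_norm_le_inner z S' hsupp
  calc -(C * ‖restrict z S‖) ≤ -(δ * ‖restrict z S'‖ * ‖x‖) := by
        rw [neg_le_neg_iff, mul_comm C]
        exact mul_le_mul (hdmo S' hS') hxC (norm_nonneg x) (norm_nonneg _)
    _ ≤ ⟪δ • z, x⟫_ℝ := by
        rw [real_inner_smul_left, mul_assoc, ← mul_neg]
        exact mul_le_mul_of_nonneg_left hCS hδ0.le

/-- If `S ∈ 𝕄` satisfies the δ-DMO guarantee `‖z_S‖ ≥ δ · max_{S' ∈ 𝕄} ‖z_{S'}‖` with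
`δ ∈ (0,1]`, then `v = -C • z_S / ‖z_S‖` satisfies the approximate IPO guarantee
`⟨z, v⟩ ≤ δ · min_{s ∈ D} ⟨z, s⟩` where `D = conv{x : ‖x‖ ≤ C, supp x ∈ 𝕄}`. -/
theorem stmt2 {d : ℕ} (𝕄 : Finset (Finset (Fin d))) (h𝕄 : 𝕄.Nonempty)
    (hcover : ∀ i : Fin d, ∃ S ∈ 𝕄, i ∈ S)
    (C : ℝ) (hC : 0 < C) (z : EuclideanSpace ℝ (Fin d))
    (δ : ℝ) (hδ0 : 0 < δ) (hδ1 : δ ≤ 1)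
    (S : Finset (Fin d)) (hS : S ∈ 𝕄)
    (hdmo : ∀ S' ∈ 𝕄, δ * ‖restrict z S'‖ ≤ ‖restrict z S‖)
    (hzS : restrict z S ≠ 0) :
    ∀ s ∈ convexHull ℝ {x : EuclideanSpace ℝ (Fin d) |
        ‖x‖ ≤ C ∧ ∃ S' ∈ 𝕄, ∀ i, x i ≠ 0 → i ∈ S'},
      ⟪z, ((-(C / ‖restrict z S‖)) • restrict z S : EuclideanSpace ℝ (Fin d))⟫_ℝ
        ≤ δ * ⟪z, s⟫_ℝ :=
  stmt2_general 𝕄 C z δ hδ0 S hdmo
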